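/- arXiv:2009.10574 — 2 statements merged into one kernel-verified Lean document; each statement's English description precedes it below -/
import Mathlib

section
/- Let G be a finite simple graph and let dist denote the shortest-path distance in G (with dist(a,b) = ∞ if a and b are in different connected components). For any two vertices a₁, a₂ and any natural number r, the subgraph of G induced on the union of the r-balls around a₁ and a₂ is connected if and only if dist(a₁, a₂) ≤ 2r + 1. -/
/-!
A geodesic from `a₁` to `a₂` of length at most `2r + 1` splits at each of its vertices into two
pieces, one of which has length at most `r`; so it runs inside the union of the two balls and links
them, while each ball is connected through geodesics to its center. Conversely, a walk inside the
union leaves the ball around `a₁` along an edge into the ball around `a₂`, and the triangle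
inequality across that edge gives `dist(a₁, a₂) ≤ r + 1 + r`.
-/

open SimpleGraph

theorem ENat.le_or_le_of_add_le_two_mul_add_one {a b : ℕ∞} {r : ℕ} (h : a + b ≤ 2 * r + 1) :
    a ≤ r ∨ b ≤ r := by
  have hfin : a + b ≠ ⊤ :=
    ne_top_of_le_ne_top (by exact_mod_cast ENat.natCast_ne_top (2 * r + 1)) h
  lift a to ℕ using (WithTop.add_ne_top.1 hfin).1
  lift b to ℕ using (WithTop.add_ne_top.1 hfin).2
  norm_cast at h ⊢
  omega

namespace SimpleGraph

variable {V : Type*} {G : SimpleGraph V}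

lemma Walk.edist_add_edist_le_length {u v x : V} (p : G.Walk u v) (hx : x ∈ p.support) :
    G.edist u x + G.edist x v ≤ p.length := by
  classical
  calc G.edist u x + G.edist x v
      ≤ (p.takeUntil x hx).length + (p.dropUntil x hx).length :=
        add_le_add (p.takeUntil x hx).edist_le (p.dropUntil x hx).edist_le
    _ = p.length := by rw [← Nat.cast_add, ← Walk.length_append, p.take_spec hx]

lemma Walk.exists_adj_of_support_subset_union {u v : V} {A B : Set V} (p : G.Walk u v)
    (hp : ∀ x ∈ p.support, x ∈ A ∪ B) (hu : u ∈ A) (hv : v ∉ A) :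
    ∃ x ∈ A, ∃ y ∈ B, G.Adj x y := by
  obtain ⟨d, hd, hfst, hsnd⟩ := p.exists_boundary_dart A hu hv
  exact ⟨d.fst, hfst, d.snd,
    (hp _ (p.dart_snd_mem_support_of_mem_darts hd)).resolve_left hsnd, d.adj⟩

lemma Reachable.induce_of_geodesic_subset {s : Set V} {u v : V} (huv : G.Reachable u v)
    (hs : ∀ x, G.edist u x + G.edist x v ≤ G.edist u v → x ∈ s) (hu : u ∈ s) (hv : v ∈ s) :
    (G.induce s).Reachable ⟨u, hu⟩ ⟨v, hv⟩ := by
  obtain ⟨p, hp⟩ := huv.exists_walk_length_eq_edist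
  exact ⟨p.induce s fun x hx => hs x (hp ▸ p.edist_add_edist_le_length hx)⟩

lemma reachable_induce_of_ball_subset {s : Set V} {a b : V} {r : ℕ}
    (hs : {x | G.edist a x ≤ r} ⊆ s) (hab : G.edist a b ≤ r) (ha : a ∈ s) (hb : b ∈ s) :
    (G.induce s).Reachable ⟨a, ha⟩ ⟨b, hb⟩ :=
  (edist_ne_top_iff_reachable.1 (ne_top_of_le_ne_top (ENat.natCast_ne_top r) hab)
    ).induce_of_geodesic_subset (fun _ hx => hs (le_self_add.trans (hx.trans hab))) ha hb

lemma Walk.edist_le_two_mul_add_one_of_support_subset {a₁ a₂ : V} {r : ℕ} (p : G.Walk a₁ a₂)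
    (hp : ∀ x ∈ p.support, G.edist a₁ x ≤ r ∨ G.edist a₂ x ≤ r) :
    G.edist a₁ a₂ ≤ 2 * r + 1 := by
  by_cases hnear : G.edist a₁ a₂ ≤ r
  · exact hnear.trans (by norm_cast; omega)
  obtain ⟨x, hx, y, hy, hxy⟩ := p.exists_adj_of_support_subset_union
    (A := {x | G.edist a₁ x ≤ r}) (B := {x | G.edist a₂ x ≤ r}) hp (by simp) hnear
  calc G.edist a₁ a₂ ≤ G.edist a₁ x + G.edist x y + G.edist y a₂ :=
        SimpleGraph.edist_triangle.trans (add_le_add SimpleGraph.edist_triangle le_rfl)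
    _ ≤ r + 1 + r := by
        gcongr
        · exact hx
        · exact (edist_eq_one_iff_adj.2 hxy).le
        · exact SimpleGraph.edist_comm ▸ hy
    _ = 2 * r + 1 := by ring

lemma reachable_induce_of_edist_le_two_mul_add_one {s : Set V} {a₁ a₂ : V} {r : ℕ}
    (hs : {x | G.edist a₁ x ≤ r ∨ G.edist a₂ x ≤ r} ⊆ s) (hd : G.edist a₁ a₂ ≤ 2 * r + 1)
    (ha₁ : a₁ ∈ s) (ha₂ : a₂ ∈ s) :
    (G.induce s).Reachable ⟨a₁, ha₁⟩ ⟨a₂, ha₂⟩ := by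
  have hreach : G.Reachable a₁ a₂ := edist_ne_top_iff_reachable.1 <|
    ne_top_of_le_ne_top (by exact_mod_cast ENat.natCast_ne_top (2 * r + 1)) hd
  refine hreach.induce_of_geodesic_subset (fun x hx => hs ?_) ha₁ ha₂
  exact (ENat.le_or_le_of_add_le_two_mul_add_one (hx.trans hd)).imp id (edist_comm ▸ ·)

end SimpleGraph

theorem induced_union_balls_connected_iff_general {V : Type*}
    (G : SimpleGraph V) (a₁ a₂ : V) (r : ℕ) :
    (G.induce {b : V | G.edist a₁ b ≤ r ∨ G.edist a₂ b ≤ r}).Connected ↔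
      G.edist a₁ a₂ ≤ 2 * r + 1 := by
  set s : Set V := {b : V | G.edist a₁ b ≤ r ∨ G.edist a₂ b ≤ r}
  have ha₁ : a₁ ∈ s := Or.inl (by simp)
  have ha₂ : a₂ ∈ s := Or.inr (by simp)
  constructor
  · intro hconn
    obtain ⟨q⟩ := hconn.preconnected ⟨a₁, ha₁⟩ ⟨a₂, ha₂⟩
    refine (q.map (Embedding.induce s).toHom).edist_le_two_mul_add_one_of_support_subset ?_
    simp only [Walk.support_map, List.mem_map]
    rintro _ ⟨y, -, rfl⟩
    exact y.2
  · intro hd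
    have hmid := reachable_induce_of_edist_le_two_mul_add_one le_rfl hd ha₁ ha₂
    refine (connected_iff_exists_forall_reachable _).2 ⟨⟨a₁, ha₁⟩, ?_⟩
    rintro ⟨b, hb | hb⟩
    · exact reachable_induce_of_ball_subset (fun _ => Or.inl) hb ha₁ _
    · exact hmid.trans (reachable_induce_of_ball_subset (fun _ => Or.inr) hb ha₂ _)

/-- For a finite simple graph `G` and vertices `a₁, a₂`, the subgraph
induced on the union of the `r`-balls around `a₁` and `a₂` is connected iff
`dist(a₁, a₂) ≤ 2r + 1` (distance measured in `ℕ∞`, infinite across components). -/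
theorem induced_union_balls_connected_iff {V : Type*} [Fintype V]
    (G : SimpleGraph V) (a₁ a₂ : V) (r : ℕ) :
    (G.induce {b : V | G.edist a₁ b ≤ r ∨ G.edist a₂ b ≤ r}).Connected ↔
      G.edist a₁ a₂ ≤ 2 * r + 1 :=
  induced_union_balls_connected_iff_general G a₁ a₂ r
end

section
/- Let G be a finite simple graph, r ∈ ℕ, k ≥ 1, and let a₁, …, a_k be vertices of G. If the subgraph of G induced on the union of the r-balls N_r(a₁) ∪ ⋯ ∪ N_r(a_k) is connected, then this union is contained in the (r + (k−1)(2r+1))-ball around a_i, for every i ∈ {1, …, k}. -/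
/-!
Call two centres `a i`, `a j` close when `G.edist (a i) (a j) ≤ 2r+1`. Along any walk inside the
union of the balls, consecutive vertices lie in balls whose centres are close, so connectivity of
the union makes the closeness graph on the `k` centres connected. A path in that graph has at most
`k - 1` edges, so any two centres are within `(k-1)(2r+1)`, and every point of the union is within
a further `r` of its own centre.
-/

namespace SimpleGraph

variable {V ι : Type*} {G : SimpleGraph V} {a : ι → V} {d : ℕ}

variable (G) in
def proximityGraph (a : ι → V) (d : ℕ) : SimpleGraph ι where
  Adj i j := i ≠ j ∧ G.edist (a i) (a j) ≤ d
  symm := ⟨fun _ _ h => ⟨h.1.symm, G.edist_comm ▸ h.2⟩⟩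
  loopless := ⟨fun _ h => h.1 rfl⟩

lemma proximityGraph_reachable_of_edist_le {i j : ι} (h : G.edist (a i) (a j) ≤ d) :
    (G.proximityGraph a d).Reachable i j := by
  by_cases hij : i = j
  · exact hij ▸ .refl i
  · exact Adj.reachable ⟨hij, h⟩

lemma edist_le_length_mul_of_proximityGraph_walk {i j : ι}
    (w : (G.proximityGraph a d).Walk i j) : G.edist (a i) (a j) ≤ w.length * d := by
  induction w with
  | nil => simp
  | cons h _ ih =>
    calc _ ≤ _ := G.edist_triangle
      _ ≤ d + _ := add_le_add h.2 ih
      _ = _ := by push_cast [Walk.length_cons]; ring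

lemma edist_le_of_proximityGraph_reachable [Fintype ι] {i j : ι}
    (h : (G.proximityGraph a d).Reachable i j) :
    G.edist (a i) (a j) ≤ ((Fintype.card ι - 1) * d : ℕ) := by
  obtain ⟨w, hw, -⟩ := h.exists_path_of_dist
  have hlen : w.length ≤ Fintype.card ι - 1 := by have := hw.length_lt; omega
  calc G.edist (a i) (a j) ≤ w.length * d := edist_le_length_mul_of_proximityGraph_walk w
    _ ≤ _ := mod_cast Nat.mul_le_mul_right d hlen

theorem proximityGraph_preconnected_of_induce_preconnected {r : ℕ}
    (h : (G.induce {b | ∃ i, G.edist (a i) b ≤ r}).Preconnected) :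
    (G.proximityGraph a (2 * r + 1)).Preconnected := by
  set S := {b | ∃ i, G.edist (a i) b ≤ r}
  choose c hc using fun x : S => x.2
  have centre_step : ∀ x y : S, (G.induce S).Adj x y →
      (G.proximityGraph a (2 * r + 1)).Reachable (c x) (c y) := by
    intro x y hxy
    apply proximityGraph_reachable_of_edist_le
    calc G.edist (a (c x)) (a (c y))
        ≤ G.edist (a (c x)) x + (G.edist x y + G.edist y (a (c y))) :=
          G.edist_triangle.trans (add_le_add_right G.edist_triangle _)
      _ ≤ r + (1 + r) := by
          gcongr
          · exact hc x
          · exact (edist_eq_one_iff_adj (G := G)).mpr hxy |>.le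
          · exact G.edist_comm ▸ hc y
      _ = ((2 * r + 1 : ℕ) : ℕ∞) := by push_cast; ring
  have centre_reachable : ∀ x y : S, (G.induce S).Reachable x y →
      (G.proximityGraph a (2 * r + 1)).Reachable (c x) (c y) := by
    intro x y hxy
    rw [reachable_iff_reflTransGen] at hxy ⊢
    exact hxy.lift' c fun x y hxy => (reachable_iff_reflTransGen _ _).mp (centre_step x y hxy)
  have own_centre : ∀ i : ι, (G.proximityGraph a (2 * r + 1)).Reachable i (c ⟨a i, i, by simp⟩) :=
    fun i => proximityGraph_reachable_of_edist_le <| by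
      rw [edist_comm]
      exact (hc _).trans (mod_cast (by omega : r ≤ 2 * r + 1))
  intro i j
  exact (own_centre i).trans ((centre_reachable _ _ (h _ _)).trans (own_centre j).symm)

end SimpleGraph

open SimpleGraph in
theorem union_balls_subset_of_induced_connected_general {V : Type*}
    (G : SimpleGraph V) (r k : ℕ) (a : Fin k → V)
    (hconn : (G.induce {b : V | ∃ i : Fin k, G.edist (a i) b ≤ r}).Connected) :
    ∀ i : Fin k,
      {b : V | ∃ j : Fin k, G.edist (a j) b ≤ r} ⊆
        {b : V | G.edist (a i) b ≤ (r + (k - 1) * (2 * r + 1) : ℕ)} := by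
  rintro i b ⟨j, hjb⟩
  have hij := edist_le_of_proximityGraph_reachable
    (proximityGraph_preconnected_of_induce_preconnected hconn.preconnected i j)
  rw [Fintype.card_fin] at hij
  calc G.edist (a i) b ≤ G.edist (a i) (a j) + G.edist (a j) b := G.edist_triangle
    _ ≤ ((k - 1) * (2 * r + 1) : ℕ) + r := add_le_add hij hjb
    _ = _ := by push_cast; ring

/-- If the subgraph induced on the union of the `r`-balls around
`a₁, …, a_k` (with `k ≥ 1`) is connected, then this union is contained in the
`(r + (k-1)(2r+1))`-ball around each `a i`. -/
theorem union_balls_subset_of_induced_connected {V : Type*} [Fintype V]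
    (G : SimpleGraph V) (r k : ℕ) (hk : 1 ≤ k) (a : Fin k → V)
    (hconn : (G.induce {b : V | ∃ i : Fin k, G.edist (a i) b ≤ r}).Connected) :
    ∀ i : Fin k,
      {b : V | ∃ j : Fin k, G.edist (a j) b ≤ r} ⊆
        {b : V | G.edist (a i) b ≤ (r + (k - 1) * (2 * r + 1) : ℕ)} :=
  union_balls_subset_of_induced_connected_general G r k a hconn
end
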